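/- arXiv:2005.07184 — 3 statements merged into one kernel-verified Lean document; each statement's English description precedes it below -/
import Mathlib

section
/- Given n, k, N, K with N ∣ n and n ∣ kN, the CommFR-GC scheme built from an [N, K, δ] linear code achieves the triple (l, m, s) = (kN/n, K, δ − 1): each worker computes l partial gradients, communicates a vector of length ⌈d/K⌉, and the server can recover the full gradient sum from any n − (δ − 1) workers. -/
/-- Reshape a gradient vector g ∈ ℝ^d (padded with zeros) column-wise into a
⌈d/K⌉ × K matrix, as in the CommFR-GC encoding. -/
def reshapeMat (d K : ℕ) (g : Fin d → ℝ) :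
    Matrix (Fin ((d + K - 1) / K)) (Fin K) ℝ := fun r c =>
  if h : (c : ℕ) * ((d + K - 1) / K) + (r : ℕ) < d then g ⟨_, h⟩ else 0

lemma reshapeMat_inj (d K : ℕ) (hK : 1 ≤ K) (v w : Fin d → ℝ)
    (h : reshapeMat d K v = reshapeMat d K w) : v = w := by
  funext t
  set q := (d + K - 1) / K with hq
  clear_value q
  have hd0 : 0 < d := t.pos
  have hdm : K * q + (d + K - 1) % K = d + K - 1 := by
    rw [hq]; exact Nat.div_add_mod _ _
  have hmod := Nat.mod_lt (d + K - 1) (by omega : 0 < K)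
  have hcm : q * K = K * q := Nat.mul_comm _ _
  have hdq : d ≤ q * K := by omega
  have hq0 : 0 < q := by
    rcases Nat.eq_zero_or_pos q with h0 | h0
    · rw [h0] at hdq; omega
    · exact h0
  have hr : t.1 % q < q := Nat.mod_lt _ hq0
  have hc : t.1 / q < K := by
    apply Nat.div_lt_of_lt_mul
    have := t.2; omega
  have hdmt := Nat.div_add_mod t.1 q
  have hcm2 : (t.1 / q) * q = q * (t.1 / q) := Nat.mul_comm _ _
  have key := congrFun (congrFun h ⟨t.1 % q, by rw [← hq]; exact hr⟩) ⟨t.1 / q, hc⟩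
  simp only [reshapeMat] at key
  have hlt : (t.1 / q) * ((d + K - 1) / K) + t.1 % q < d := by rw [← hq]; omega
  rw [dif_pos hlt, dif_pos hlt] at key
  have ht : (⟨(t.1 / q) * ((d + K - 1) / K) + t.1 % q, hlt⟩ : Fin d) = t := by
    ext
    show (t.1 / q) * ((d + K - 1) / K) + t.1 % q = t.1
    rw [← hq]; omega
  rwa [ht] at key

/-- CommFR-GC achieves the triple (l = kN/n, m = K, s = δ - 1): with n = p·N workers
in p groups of size N, k = p·l datasets with block i assigned to group i, each worker
computing l partial gradients and communicating the ⌈d/K⌉-dimensional vector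
g^{(i)}_mat · G_j, the server can recover the full gradient sum from the messages of
the non-straggling workers whenever at most δ - 1 workers straggle. -/
theorem commFRGC_achieves_triple (n k p N K l d δ : ℕ)
    (hn : n = p * N) (hk : k = p * l) (hK : 1 ≤ K) (hδ : 1 ≤ δ) (hδN : δ ≤ N)
    (G : Matrix (Fin K) (Fin N) ℝ)
    (hdist : ∀ x : Fin K → ℝ, x ≠ 0 → δ ≤ hammingNorm (Matrix.vecMul x G))
    (S : Finset (Fin p × Fin N)) (hS : S.card ≤ δ - 1)
    (g g' : Fin p → Fin l → Fin d → ℝ)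
    (hagree : ∀ i : Fin p, ∀ j : Fin N, (i, j) ∉ S →
      Matrix.mulVec (reshapeMat d K (∑ u : Fin l, g i u)) (fun a => G a j) =
      Matrix.mulVec (reshapeMat d K (∑ u : Fin l, g' i u)) (fun a => G a j)) :
    ∑ i : Fin p, ∑ u : Fin l, g i u = ∑ i : Fin p, ∑ u : Fin l, g' i u := by
  refine Finset.sum_congr rfl fun i _ => ?_
  set A := reshapeMat d K (∑ u : Fin l, g i u) with hA
  set B := reshapeMat d K (∑ u : Fin l, g' i u) with hB
  have hAB : A = B := by
    funext r c
    set x : Fin K → ℝ := fun a => A r a - B r a with hx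
    have hx0 : x = 0 := by
      by_contra hne
      have hδle := hdist x hne
      -- support of vecMul x G is contained in {j | (i,j) ∈ S}
      have hsub : (Finset.univ.filter fun j => Matrix.vecMul x G j ≠ 0) ⊆
          Finset.univ.filter fun j : Fin N => (i, j) ∈ S := by
        intro j hj
        simp only [Finset.mem_filter, Finset.mem_univ, true_and] at hj ⊢
        by_contra hjS
        apply hj
        have := congrFun (hagree i j hjS) r
        simp only [Matrix.mulVec, dotProduct] at this
        simp only [Matrix.vecMul, dotProduct, hx, sub_mul, Finset.sum_sub_distrib]
        rw [← hA, ← hB] at this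
        rw [this]
        ring
      have hcard : (Finset.univ.filter fun j : Fin N => (i, j) ∈ S).card ≤ S.card := by
        apply Finset.card_le_card_of_injOn (fun j => (i, j))
        · intro j hj
          simpa using (Finset.mem_filter.mp hj).2
        · intro a _ b _ hab
          simpa using hab
      have : hammingNorm (Matrix.vecMul x G) ≤ δ - 1 := by
        calc hammingNorm (Matrix.vecMul x G)
            ≤ (Finset.univ.filter fun j : Fin N => (i, j) ∈ S).card :=
              Finset.card_le_card hsub
          _ ≤ S.card := hcard
          _ ≤ δ - 1 := hS
      omega
    have := congrFun hx0 c
    simp only [hx, Pi.zero_apply] at this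
    linarith
  exact reshapeMat_inj d K hK _ _ (hA ▸ hB ▸ hAB)
end

section
/- Fix integers m ≥ 1, s ≥ 0, κ > 0 and define f_{s,m,κ}(t) = (1/√(2π)) · binom(m+s, t) · (C t / (κ (t − m + 1)))^{t − m + 1} for integers m ≤ t ≤ m + s, where C is a positive constant. If κ > C s / 2 (and κ satisfies condition (8) of the paper), then f_{s,m,κ} is monotonically decreasing in t on {m, m+1, …, m+s}. -/
open Real

/-- The function f_{s,m,κ}(t) of equation (7) of the paper. -/
noncomputable def fVal (s m : ℕ) (κ C : ℝ) (t : ℕ) : ℝ :=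
  (1 / Real.sqrt (2 * Real.pi)) * ((m + s).choose t) *
    (C * t / (κ * ((t : ℝ) - m + 1))) ^ (t - m + 1)

lemma fVal_step (m s : ℕ) (hm : 1 ≤ m) (κ C : ℝ) (hC : 0 < C) (hκ0 : 0 < κ)
    (hκs : κ > C * s / 2) (t : ℕ) (ht : m ≤ t) (ht2 : t + 1 ≤ m + s) :
    fVal s m κ C (t + 1) ≤ fVal s m κ C t := by
  obtain ⟨k, rfl⟩ : ∃ k, t = m + k := ⟨t - m, (Nat.add_sub_cancel' ht).symm⟩
  have hks : k + 1 ≤ s := by omega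
  unfold fVal
  have he1 : m + k - m + 1 = k + 1 := by omega
  have he2 : m + k + 1 - m + 1 = k + 2 := by omega
  rw [he1, he2]
  have hm1 : (1 : ℝ) ≤ (m : ℝ) := by exact_mod_cast hm
  have hk0 : (0 : ℝ) ≤ (k : ℝ) := Nat.cast_nonneg k
  have hs0 : (0 : ℝ) ≤ (s : ℝ) := Nat.cast_nonneg s
  have hks' : (k : ℝ) + 1 ≤ (s : ℝ) := by exact_mod_cast hks
  set B : ℝ := ((m + s).choose (m + k) : ℝ) with hB
  set B' : ℝ := ((m + s).choose (m + k + 1) : ℝ) with hB'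
  have hBnn : 0 ≤ B := Nat.cast_nonneg _
  have hB'nn : 0 ≤ B' := Nat.cast_nonneg _
  have hchoose : B' * ((m : ℝ) + k + 1) = B * ((s : ℝ) - k) := by
    have h : (m + s).choose (m + k + 1) * (m + k + 1) = (m + s).choose (m + k) * (s - k) := by
      rw [Nat.choose_succ_right_eq]; congr 1; omega
    have h' := congrArg (Nat.cast : ℕ → ℝ) h
    push_cast [Nat.cast_sub (by omega : k ≤ s)] at h'
    rw [hB, hB']
    push_cast
    linarith [h']
  -- simplify casts in the goal
  push_cast
  have hsimp2 : (m : ℝ) + k + 1 - m + 1 = (k : ℝ) + 2 := by ring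
  have hsimp1 : (m : ℝ) + k - m + 1 = (k : ℝ) + 1 := by ring
  rw [hsimp1, hsimp2]
  have hbase2nn : (0 : ℝ) ≤ C * ((m : ℝ) + k + 1) / (κ * ((k : ℝ) + 2)) := by
    positivity
  -- base inequality
  have hA : C * ((m : ℝ) + k + 1) / (κ * ((k : ℝ) + 2)) ≤ C * ((m : ℝ) + k) / (κ * ((k : ℝ) + 1)) := by
    rw [div_le_div_iff₀ (by positivity) (by positivity)]
    have h := mul_nonneg (mul_pos hC hκ0).le (show (0 : ℝ) ≤ (m : ℝ) - 1 by linarith)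
    nlinarith [h]
  have hApow : (C * ((m : ℝ) + k + 1) / (κ * ((k : ℝ) + 2))) ^ (k + 1)
      ≤ (C * ((m : ℝ) + k) / (κ * ((k : ℝ) + 1))) ^ (k + 1) :=
    pow_le_pow_left₀ hbase2nn hA (k + 1)
  have key : C * ((s : ℝ) - k) ≤ κ * ((k : ℝ) + 2) := by
    nlinarith [mul_nonneg (sub_nonneg.mpr hκs.le) (show (0 : ℝ) ≤ (k : ℝ) + 2 by positivity),
      mul_nonneg (mul_nonneg hC.le hs0) hk0, mul_nonneg hC.le hk0]
  have hpos : (0 : ℝ) < κ * ((k : ℝ) + 2) := by positivity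
  have hBstep : B' * (C * ((m : ℝ) + k + 1) / (κ * ((k : ℝ) + 2))) ≤ B := by
    rw [show B' * (C * ((m : ℝ) + k + 1) / (κ * ((k : ℝ) + 2)))
        = (B' * ((m : ℝ) + k + 1)) * C / (κ * ((k : ℝ) + 2)) by ring, hchoose,
      div_le_iff₀ hpos]
    nlinarith [mul_le_mul_of_nonneg_left key hBnn]
  have hc : (0 : ℝ) ≤ 1 / Real.sqrt (2 * Real.pi) := by positivity
  have hmain : B' * (C * ((m : ℝ) + k + 1) / (κ * ((k : ℝ) + 2))) ^ (k + 2)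
      ≤ B * (C * ((m : ℝ) + k) / (κ * ((k : ℝ) + 1))) ^ (k + 1) := by
    have : B' * (C * ((m : ℝ) + k + 1) / (κ * ((k : ℝ) + 2))) ^ (k + 2)
        = (B' * (C * ((m : ℝ) + k + 1) / (κ * ((k : ℝ) + 2))))
          * (C * ((m : ℝ) + k + 1) / (κ * ((k : ℝ) + 2))) ^ (k + 1) := by ring
    rw [this]
    exact mul_le_mul hBstep hApow (by positivity) hBnn
  calc 1 / Real.sqrt (2 * Real.pi) * B' * (C * ((m : ℝ) + k + 1) / (κ * ((k : ℝ) + 2))) ^ (k + 2)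
      = 1 / Real.sqrt (2 * Real.pi) * (B' * (C * ((m : ℝ) + k + 1) / (κ * ((k : ℝ) + 2))) ^ (k + 2)) := by ring
    _ ≤ 1 / Real.sqrt (2 * Real.pi) * (B * (C * ((m : ℝ) + k) / (κ * ((k : ℝ) + 1))) ^ (k + 1)) :=
        mul_le_mul_of_nonneg_left hmain hc
    _ = 1 / Real.sqrt (2 * Real.pi) * B * (C * ((m : ℝ) + k) / (κ * ((k : ℝ) + 1))) ^ (k + 1) := by ring

/-- For κ satisfying condition (8) (in particular κ > Cs/2), f_{s,m,κ} is
monotonically decreasing in t on {m, m+1, …, m+s}. -/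
theorem f_monotone_decreasing (m s : ℕ) (hm : 1 ≤ m) (ε κ C : ℝ)
    (hε : 0 < ε) (hε1 : ε < 1) (hC : 0 < C) (hC6 : C ≤ 6.414)
    (hκ : κ > max ((1 / (ε * Real.sqrt (2 * Real.pi))) ^ ((1 : ℝ) / (s + 1)) *
        (C * (m + s) / (s + 1))) (C * s / 2)) :
    ∀ t₁ t₂ : ℕ, m ≤ t₁ → t₁ ≤ t₂ → t₂ ≤ m + s →
      fVal s m κ C t₂ ≤ fVal s m κ C t₁ := by
  have hm1 : (1 : ℝ) ≤ (m : ℝ) := by exact_mod_cast hm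
  have hs0 : (0 : ℝ) ≤ (s : ℝ) := Nat.cast_nonneg s
  have ha : 0 < (1 / (ε * Real.sqrt (2 * Real.pi))) ^ ((1 : ℝ) / (s + 1)) *
      (C * ((m : ℝ) + s) / ((s : ℝ) + 1)) := by
    apply mul_pos
    · apply Real.rpow_pos_of_pos
      have := Real.pi_pos
      positivity
    · apply div_pos (mul_pos hC (by linarith)) (by linarith)
  have hκ0 : 0 < κ := lt_trans (lt_of_lt_of_le ha (le_max_left _ _)) hκ
  have hκs : κ > C * s / 2 := lt_of_le_of_lt (le_max_right _ _) hκ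
  intro t₁ t₂ h1 h12 h3
  induction t₂, h12 using Nat.le_induction with
  | base => exact le_refl _
  | succ n hn ih =>
    calc fVal s m κ C (n + 1) ≤ fVal s m κ C n :=
          fVal_step m s hm κ C hC hκ0 hκs n (le_trans h1 hn) h3
      _ ≤ fVal s m κ C t₁ := ih (by omega)
end

section
/- Combining the previous two steps: let G be an m×(m+s) matrix with i.i.d. standard normal entries, let 0 < ε < 1, and let κ satisfy condition (8). Let t* be the smallest integer in [m, m+s] with f_{s,m,κ}(t*) ≤ ε, where f_{s,m,κ}(t) = (1/√(2π)) binom(m+s,t) (Ct/(κ(t−m+1)))^{t−m+1}. Then with probability at least 1 − ε, every m×t* submatrix of G has condition number at most κ; consequently the CommFR-GC scheme tolerates at least s + m − t* stragglers under numerical stability constraint κ. -/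
/-!
A union bound over the `(m + s).choose t*` sets of `t*` columns: each one fails to have
condition number at most `κ` with probability at most the Chen–Dongarra tail, and these
failure probabilities add up to `f_{s,m,κ}(t*) ≤ ε`. Outside this failure event, removing at
most `s + m - t*` straggling columns still leaves `t*` columns, and the submatrix they form
is well conditioned, hence has injective `vecMul` (the decoding step of CommFR-GC).
-/

open MeasureTheory

lemma ofReal_one_sub_le_measure_of_measure_compl_le {Ω : Type*} [MeasurableSpace Ω]
    {μ : Measure Ω} [IsProbabilityMeasure μ] {A : Set Ω} {ε : ℝ} (hε : 0 ≤ ε)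
    (hAc : μ Aᶜ ≤ ENNReal.ofReal ε) : ENNReal.ofReal (1 - ε) ≤ μ A := by
  rw [ENNReal.ofReal_sub _ hε, ENNReal.ofReal_one, tsub_le_iff_right]
  calc (1 : ENNReal) = μ Set.univ := measure_univ.symm
    _ ≤ μ A + μ Aᶜ := measure_univ_le_add_compl A
    _ ≤ μ A + ENNReal.ofReal ε := add_le_add_right hAc _

lemma measure_iUnion_le_card_mul {Ω ι : Type*} [MeasurableSpace Ω] [Fintype ι]
    {μ : Measure Ω} {E : ι → Set Ω} {p : ℝ} (hE : ∀ i, μ (E i) ≤ ENNReal.ofReal p) :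
    μ (⋃ i, E i) ≤ ENNReal.ofReal (Fintype.card ι * p) := by
  calc μ (⋃ i, E i) ≤ ∑ i, μ (E i) := measure_iUnion_fintype_le μ E
    _ ≤ Fintype.card ι • ENNReal.ofReal p := Finset.sum_le_card_nsmul _ _ _ fun i _ => hE i
    _ = ENNReal.ofReal (Fintype.card ι * p) := by
      rw [nsmul_eq_mul, ← ENNReal.ofReal_natCast, ← ENNReal.ofReal_mul (Nat.cast_nonneg _)]

section Submatrices

variable {m n : ℕ} (cond : ∀ t : ℕ, Matrix (Fin m) (Fin t) ℝ → ℝ) (κ : ℝ)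

def AllColumnSubmatricesCondLE (t : ℕ) (M : Matrix (Fin m) (Fin n) ℝ) : Prop :=
  ∀ (T : Finset (Fin n)) (h : T.card = t), cond t (M.submatrix id (T.orderEmbOfFin h)) ≤ κ

lemma AllColumnSubmatricesCondLE.exists_avoiding {t : ℕ} {M : Matrix (Fin m) (Fin n) ℝ}
    (hM : AllColumnSubmatricesCondLE cond κ t M) (ht : t ≤ n) {S : Finset (Fin n)}
    (hS : S.card ≤ n - t) :
    ∃ e : Fin t → Fin n, Function.Injective e ∧ (∀ j, e j ∉ S) ∧
      cond t (M.submatrix id e) ≤ κ := by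
  have hcard : t ≤ Sᶜ.card := by
    rw [Finset.card_compl, Fintype.card_fin]
    omega
  obtain ⟨T, hTS, hT⟩ := Finset.exists_subset_card_eq hcard
  exact ⟨T.orderEmbOfFin hT, (T.orderEmbOfFin hT).injective,
    fun j => Finset.mem_compl.mp (hTS (T.orderEmbOfFin_mem hT j)), hM T hT⟩

lemma measure_not_allColumnSubmatricesCondLE_le {Ω : Type*} [MeasurableSpace Ω]
    {μ : Measure Ω} {M : Ω → Matrix (Fin m) (Fin n) ℝ} {t : ℕ} {p : ℝ}
    (htail : ∀ (T : Finset (Fin n)) (h : T.card = t),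
      μ {ω | κ < cond t ((M ω).submatrix id (T.orderEmbOfFin h))} ≤ ENNReal.ofReal p) :
    μ {ω | AllColumnSubmatricesCondLE cond κ t (M ω)}ᶜ ≤
      ENNReal.ofReal (n.choose t * p) := by
  have hcover : {ω | AllColumnSubmatricesCondLE cond κ t (M ω)}ᶜ ⊆
      ⋃ T : {T : Finset (Fin n) // T.card = t},
        {ω | κ < cond t ((M ω).submatrix id (T.1.orderEmbOfFin T.2))} := by
    intro ω hω
    simp only [AllColumnSubmatricesCondLE, Set.mem_compl_iff, Set.mem_ofPred_eq, not_forall,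
      not_le] at hω
    obtain ⟨T, hT, hκ⟩ := hω
    exact Set.mem_iUnion.mpr ⟨⟨T, hT⟩, hκ⟩
  calc _ ≤ _ := measure_mono hcover
    _ ≤ _ := measure_iUnion_le_card_mul fun T => htail T.1 T.2
    _ = _ := by rw [Fintype.card_finset_len, Fintype.card_fin]

end Submatrices

theorem straggler_threshold_numerical_stability_general {Ω : Type*} [MeasurableSpace Ω]
    (μ : Measure Ω) [IsProbabilityMeasure μ]
    (m s : ℕ) (ε κ C : ℝ)
    (hε : 0 < ε)
    (cond : ∀ t : ℕ, Matrix (Fin m) (Fin t) ℝ → ℝ)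
    (G : Ω → Matrix (Fin m) (Fin (m + s)) ℝ)
    (htail : ∀ t : ℕ, m ≤ t → t ≤ m + s →
      ∀ (T : Finset (Fin (m + s))) (h : T.card = t),
        μ {ω | κ < cond t ((G ω).submatrix id (T.orderEmbOfFin h))} ≤
          ENNReal.ofReal ((1 / Real.sqrt (2 * Real.pi)) *
            (C * t / (κ * ((t : ℝ) - m + 1))) ^ (t - m + 1)))
    (hcond : ∀ (t : ℕ) (M : Matrix (Fin m) (Fin t) ℝ), cond t M ≤ κ →
      Function.Injective fun x : Fin m → ℝ => Matrix.vecMul x M)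
    (tstar : ℕ) (ht1 : m ≤ tstar) (ht2 : tstar ≤ m + s)
    (htf : fVal s m κ C tstar ≤ ε) :
    ENNReal.ofReal (1 - ε) ≤
      μ {ω | (∀ (T : Finset (Fin (m + s))) (h : T.card = tstar),
                cond tstar ((G ω).submatrix id (T.orderEmbOfFin h)) ≤ κ) ∧
             ∀ S : Finset (Fin (m + s)), S.card ≤ s + m - tstar →
               ∃ e : Fin tstar → Fin (m + s), Function.Injective e ∧ (∀ j, e j ∉ S) ∧
                 cond tstar ((G ω).submatrix id e) ≤ κ ∧
                 Function.Injective
                   (fun x : Fin m → ℝ => Matrix.vecMul x ((G ω).submatrix id e))} := by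
  have hfail : μ {ω | AllColumnSubmatricesCondLE cond κ tstar (G ω)}ᶜ ≤ ENNReal.ofReal ε := by
    refine (measure_not_allColumnSubmatricesCondLE_le cond κ (htail tstar ht1 ht2)).trans
      (ENNReal.ofReal_le_ofReal (le_of_eq_of_le ?_ htf))
    unfold fVal
    ring
  refine (ofReal_one_sub_le_measure_of_measure_compl_le hε.le hfail).trans
    (measure_mono fun ω hω => ?_)
  refine ⟨hω, fun S hS => ?_⟩
  obtain ⟨e, he, heS, hκ⟩ := hω.exists_avoiding cond κ ht2 (S := S) (by omega)
  exact ⟨e, he, heS, hκ, hcond _ _ hκ⟩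

/-- Theorem 3 of the paper: for an m×(m+s) i.i.d. Gaussian generator matrix
(abstracted through the Chen–Dongarra condition-number tail bound), if κ satisfies
condition (8) and t* is the smallest integer in [m, m+s] with f_{s,m,κ}(t*) ≤ ε,
then with probability at least 1-ε every m×t* column-submatrix has condition
number at most κ; consequently the CommFR-GC scheme tolerates any s+m-t*
stragglers under numerical stability constraint κ. -/
theorem straggler_threshold_numerical_stability {Ω : Type*} [MeasurableSpace Ω]
    (μ : Measure Ω) [IsProbabilityMeasure μ]
    (m s : ℕ) (hm : 1 ≤ m) (ε κ C : ℝ)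
    (hε : 0 < ε) (hε1 : ε < 1) (hC : 0 < C) (hC6 : C ≤ 6.414)
    (hκ : κ > max ((1 / (ε * Real.sqrt (2 * Real.pi))) ^ ((1 : ℝ) / (s + 1)) *
        (C * (m + s) / (s + 1))) (C * s / 2))
    (cond : ∀ t : ℕ, Matrix (Fin m) (Fin t) ℝ → ℝ)
    (G : Ω → Matrix (Fin m) (Fin (m + s)) ℝ)
    (htail : ∀ t : ℕ, m ≤ t → t ≤ m + s →
      ∀ (T : Finset (Fin (m + s))) (h : T.card = t),
        μ {ω | κ < cond t ((G ω).submatrix id (T.orderEmbOfFin h))} ≤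
          ENNReal.ofReal ((1 / Real.sqrt (2 * Real.pi)) *
            (C * t / (κ * ((t : ℝ) - m + 1))) ^ (t - m + 1)))
    (hcond : ∀ (t : ℕ) (M : Matrix (Fin m) (Fin t) ℝ), cond t M ≤ κ →
      Function.Injective fun x : Fin m → ℝ => Matrix.vecMul x M)
    (tstar : ℕ) (ht1 : m ≤ tstar) (ht2 : tstar ≤ m + s)
    (htf : fVal s m κ C tstar ≤ ε)
    (htmin : ∀ t : ℕ, m ≤ t → t < tstar → ε < fVal s m κ C t) :
    ENNReal.ofReal (1 - ε) ≤
      μ {ω | (∀ (T : Finset (Fin (m + s))) (h : T.card = tstar),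
                cond tstar ((G ω).submatrix id (T.orderEmbOfFin h)) ≤ κ) ∧
             ∀ S : Finset (Fin (m + s)), S.card ≤ s + m - tstar →
               ∃ e : Fin tstar → Fin (m + s), Function.Injective e ∧ (∀ j, e j ∉ S) ∧
                 cond tstar ((G ω).submatrix id e) ≤ κ ∧
                 Function.Injective
                   (fun x : Fin m → ℝ => Matrix.vecMul x ((G ω).submatrix id e))} :=
  straggler_threshold_numerical_stability_general μ m s ε κ C hε cond G htail hcond tstar ht1 ht2
    htf
end
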